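/- arXiv:math/0606533 — 2 statements merged into one kernel-verified Lean document; each statement's English description precedes it below -/
import Mathlib

section
/- For Lebesgue-almost every x in the unit interval [0,1], the relative frequency of the digit 1 among the first n binary digits of x converges to 1/2 as n tends to infinity; that is, lim_{n→∞} (1/n)·#{k : 1 ≤ k ≤ n, d_k(x) = 1} = 1/2 for almost every x with respect to Lebesgue measure on [0,1]. -/
open MeasureTheory Filter Set ProbabilityTheory
open scoped ENNReal


lemma floor_eq_floor_mul_ediv (y : ℝ) (n : ℕ) (hn : 0 < n) :
    ⌊y⌋ = ⌊(n:ℝ) * y⌋ / (n:ℤ) := by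
  set m : ℤ := ⌊(n:ℝ) * y⌋ with hm
  set q : ℤ := m / (n:ℤ) with hqdef
  have hn' : (0:ℝ) < n := by exact_mod_cast hn
  have hnz : (0:ℤ) < (n:ℤ) := by exact_mod_cast hn
  have h1 : (m:ℝ) ≤ n * y := Int.floor_le _
  have h2 : (n:ℝ) * y < m + 1 := Int.lt_floor_add_one _
  have hq1 : q * (n:ℤ) ≤ m := Int.ediv_mul_le m hnz.ne'
  have hq2 : m < (q + 1) * (n:ℤ) := Int.lt_ediv_add_one_mul_self m hnz
  have hq1' : (q:ℝ) * (n:ℝ) ≤ (m:ℝ) := by exact_mod_cast hq1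
  have hq2a : m + 1 ≤ (q + 1) * (n:ℤ) := hq2
  have hq2' : (m:ℝ) + 1 ≤ ((q:ℝ) + 1) * (n:ℝ) := by exact_mod_cast hq2a
  refine Int.floor_eq_iff.mpr ⟨?_, ?_⟩
  · nlinarith
  · push_cast
    nlinarith

lemma measure_floor_set (N : ℕ) (hN : 0 < N) (p : ℤ → Prop) [DecidablePred p] :
    volume {x : ℝ | x ∈ Set.Ico (0:ℝ) 1 ∧ p ⌊(N:ℝ) * x⌋} =
      (((Finset.range N).filter (fun m : ℕ => p (m:ℤ))).card : ℝ≥0∞) * (N : ℝ≥0∞)⁻¹ := by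
  have hN' : (0:ℝ) < N := by exact_mod_cast hN
  have key : ∀ (m : ℕ) (x : ℝ), (m:ℝ)/N ≤ x ∧ x < ((m:ℝ)+1)/N ↔ ⌊(N:ℝ) * x⌋ = (m:ℤ) := by
    intro m x
    rw [Int.floor_eq_iff]
    constructor
    · rintro ⟨h1, h2⟩
      rw [div_le_iff₀ hN'] at h1
      rw [lt_div_iff₀ hN'] at h2
      push_cast
      constructor <;> nlinarith
    · rintro ⟨h1, h2⟩
      push_cast at h1 h2
      rw [div_le_iff₀ hN', lt_div_iff₀ hN']
      constructor <;> nlinarith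
  have hset : {x : ℝ | x ∈ Set.Ico (0:ℝ) 1 ∧ p ⌊(N:ℝ) * x⌋} =
      ⋃ m ∈ (Finset.range N).filter (fun m : ℕ => p (m:ℤ)),
        Set.Ico ((m:ℝ)/N) (((m:ℝ)+1)/N) := by
    ext x
    simp only [Set.mem_iUnion, Finset.mem_filter, Finset.mem_range, Set.mem_setOf_eq,
      Set.mem_Ico, exists_prop]
    constructor
    · rintro ⟨⟨hx0, hx1⟩, hp⟩
      have h0 : (0:ℤ) ≤ ⌊(N:ℝ) * x⌋ := Int.floor_nonneg.mpr (by positivity)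
      set m : ℕ := ⌊(N:ℝ) * x⌋.toNat with hmdef
      have hcast : ((m:ℤ)) = ⌊(N:ℝ) * x⌋ := Int.toNat_of_nonneg h0
      have hfl : ⌊(N:ℝ) * x⌋ = (m:ℤ) := hcast.symm
      refine ⟨m, ⟨?_, by rwa [← hcast] at hp⟩, (key m x).mpr hfl⟩
      · have hlt : (N:ℝ) * x < N := by nlinarith
        have h2 : ⌊(N:ℝ) * x⌋ < (N:ℤ) := Int.floor_lt.mpr (by exact_mod_cast hlt)
        omega
    · rintro ⟨m, ⟨hmN, hpm⟩, hx⟩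
      have hfl := (key m x).mp hx
      have hx0 : 0 ≤ x := le_trans (by positivity) hx.1
      have hx1 : x < 1 := lt_of_lt_of_le hx.2 (by
        rw [div_le_one hN']; exact_mod_cast hmN)
      exact ⟨⟨hx0, hx1⟩, by rw [hfl]; exact hpm⟩
  rw [hset, measure_biUnion_finset]
  · have hvol : ∀ m ∈ (Finset.range N).filter (fun m : ℕ => p (m:ℤ)),
        volume (Set.Ico ((m:ℝ)/N) (((m:ℝ)+1)/N)) = (N : ℝ≥0∞)⁻¹ := by
      intro m _
      rw [Real.volume_Ico]
      have h : ((m:ℝ)+1)/N - (m:ℝ)/N = (N:ℝ)⁻¹ := by field_simp; ring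
      rw [h, ENNReal.ofReal_inv_of_pos hN', ENNReal.ofReal_natCast]
    rw [Finset.sum_congr rfl hvol, Finset.sum_const, nsmul_eq_mul]
  · intro a ha b hb hab
    apply Set.disjoint_left.mpr
    intro x hxa hxb
    have h1 := (key a x).mp hxa
    have h2 := (key b x).mp hxb
    rw [h1] at h2
    exact hab (by exact_mod_cast h2)
  · intro m _
    exact measurableSet_Ico

lemma card_mod_two (n b : ℕ) (hb : b < 2) :
    ((Finset.range (2*n)).filter (fun m => m % 2 = b)).card = n := by
  induction n with
  | zero => simp
  | succ n ih =>
    have h : 2 * (n+1) = (2*n + 1) + 1 := by ring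
    rw [h, Finset.range_add_one, Finset.range_add_one, Finset.filter_insert, Finset.filter_insert]
    interval_cases b
    · have h1 : ¬ ((2*n+1) % 2 = 0) := by omega
      have h2 : (2*n) % 2 = 0 := by omega
      rw [if_neg h1, if_pos h2, Finset.card_insert_of_notMem (by simp), ih]
    · have h1 : (2*n+1) % 2 = 1 := by omega
      have h2 : ¬ ((2*n) % 2 = 1) := by omega
      rw [if_pos h1, if_neg h2, Finset.card_insert_of_notMem (by simp), ih]

lemma divmod_lemma {a b d : ℕ} (hd : 0 < d) (hb : b < d) :
    (a * d + b) / d = a ∧ (a * d + b) % d = b := by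
  constructor
  · rw [add_comm, Nat.add_mul_div_right _ _ hd, Nat.div_eq_of_lt hb]; omega
  · rw [add_comm, Nat.add_mul_mod_self_right, Nat.mod_eq_of_lt hb]

lemma card_filter_div_mod (q d : ℕ) (hd : 0 < d) (P Q : ℕ → Prop)
    [DecidablePred P] [DecidablePred Q] :
    ((Finset.range (q*d)).filter (fun m => P (m/d) ∧ Q (m%d))).card =
      ((Finset.range q).filter P).card * ((Finset.range d).filter Q).card := by
  rw [← Finset.card_product]
  apply Finset.card_bij' (fun m _ => (m / d, m % d)) (fun pr _ => pr.1 * d + pr.2)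
  · intro m hm
    simp only [Finset.mem_filter, Finset.mem_range] at hm
    simp only [Finset.mem_product, Finset.mem_filter, Finset.mem_range]
    refine ⟨⟨Nat.div_lt_of_lt_mul ?_, hm.2.1⟩, ⟨Nat.mod_lt _ hd, hm.2.2⟩⟩
    calc m < q * d := hm.1
      _ = d * q := by ring
  · intro pr hpr
    simp only [Finset.mem_product, Finset.mem_filter, Finset.mem_range] at hpr
    simp only [Finset.mem_filter, Finset.mem_range]
    obtain ⟨h1, h2⟩ := divmod_lemma hd hpr.2.1 (a := pr.1)
    refine ⟨?_, by rw [h1]; exact hpr.1.2, by rw [h2]; exact hpr.2.2⟩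
    calc pr.1 * d + pr.2 < pr.1 * d + d := by omega
      _ = (pr.1 + 1) * d := by ring
      _ ≤ q * d := Nat.mul_le_mul_right d hpr.1.1
  · intro m hm
    simp only
    exact Nat.div_add_mod' m d
  · intro pr hpr
    simp only [Finset.mem_product, Finset.mem_filter, Finset.mem_range] at hpr
    obtain ⟨h1, h2⟩ := divmod_lemma hd hpr.2.1 (a := pr.1)
    ext
    · simp [h1]
    · simp [h2]

lemma ennreal_pow_cancel (u w : ℕ) :
    (2^u : ℝ≥0∞) * ((2:ℝ≥0∞)^(u+w))⁻¹ = ((2:ℝ≥0∞)^w)⁻¹ := by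
  rw [pow_add, ENNReal.mul_inv (Or.inl (by positivity)) (Or.inl (by simp)),
    ← mul_assoc, ENNReal.mul_inv_cancel (by positivity) (by simp), one_mul]

lemma card_pow_mod_two (k : ℕ) (hk : 1 ≤ k) (b : ℕ) (hb : b < 2) :
    ((Finset.range (2^k)).filter (fun m => m % 2 = b)).card = 2^(k-1) := by
  rw [show (2:ℕ)^k = 2 * 2^(k-1) by rw [← pow_succ']; congr 1; omega]
  exact card_mod_two _ _ hb

lemma measure_single_digit (k : ℕ) (hk : 1 ≤ k) (b : ℕ) (hb : b < 2) :
    volume {x : ℝ | x ∈ Set.Ico (0:ℝ) 1 ∧ ⌊(2:ℝ)^k * x⌋ % 2 = (b:ℤ)} = 2⁻¹ := by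
  have hcast : ((2^k : ℕ) : ℝ) = (2:ℝ)^k := by push_cast; ring
  have h := measure_floor_set (2^k) (by positivity) (fun m => m % 2 = (b:ℤ))
  rw [hcast] at h
  rw [h]
  have hfe : (Finset.range (2^k)).filter (fun m : ℕ => (m:ℤ) % 2 = (b:ℤ)) =
      (Finset.range (2^k)).filter (fun m : ℕ => m % 2 = b) := by
    apply Finset.filter_congr
    intro m _
    constructor <;> intro hm <;> exact_mod_cast hm
  rw [hfe]
  obtain ⟨j, rfl⟩ : ∃ j, k = j + 1 := ⟨k - 1, by omega⟩
  have h2 : 2^(j+1) = 2 * 2^j := by ring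
  rw [h2, card_mod_two _ _ hb]
  have : ((2 * 2^j : ℕ) : ℝ≥0∞) = (2:ℝ≥0∞)^(j+1) := by push_cast; ring
  rw [this]
  have := ennreal_pow_cancel j 1
  rw [pow_one] at this
  rw [← this]
  congr 1
  push_cast; ring

lemma measure_pair_digit (j k : ℕ) (hj : 1 ≤ j) (hjk : j < k) (a b : ℕ)
    (ha : a < 2) (hb : b < 2) :
    volume {x : ℝ | x ∈ Set.Ico (0:ℝ) 1 ∧
        (⌊(2:ℝ)^j * x⌋ % 2 = (a:ℤ) ∧ ⌊(2:ℝ)^k * x⌋ % 2 = (b:ℤ))} = 2⁻¹ * 2⁻¹ := by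
  set d : ℕ := 2^(k-j) with hd
  have hdpos : 0 < d := by positivity
  -- rewrite the first digit in terms of ⌊2^k x⌋
  have hfloor : ∀ x : ℝ, ⌊(2:ℝ)^j * x⌋ = ⌊(2:ℝ)^k * x⌋ / (d:ℤ) := by
    intro x
    have h1 := floor_eq_floor_mul_ediv ((2:ℝ)^j * x) d hdpos
    have h2 : (d:ℝ) * ((2:ℝ)^j * x) = (2:ℝ)^k * x := by
      rw [hd]
      push_cast
      rw [← mul_assoc, ← pow_add]
      congr 2
      omega
    rwa [h2] at h1
  have hset : {x : ℝ | x ∈ Set.Ico (0:ℝ) 1 ∧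
      (⌊(2:ℝ)^j * x⌋ % 2 = (a:ℤ) ∧ ⌊(2:ℝ)^k * x⌋ % 2 = (b:ℤ))} =
      {x : ℝ | x ∈ Set.Ico (0:ℝ) 1 ∧
        ((⌊(2:ℝ)^k * x⌋ / (d:ℤ)) % 2 = (a:ℤ) ∧ ⌊(2:ℝ)^k * x⌋ % 2 = (b:ℤ))} := by
    ext x; rw [Set.mem_setOf_eq, Set.mem_setOf_eq, hfloor x]
  rw [hset]
  have hcast : ((2^k : ℕ) : ℝ) = (2:ℝ)^k := by push_cast; ring
  have h := measure_floor_set (2^k) (by positivity)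
      (fun m => (m / (d:ℤ)) % 2 = (a:ℤ) ∧ m % 2 = (b:ℤ))
  rw [hcast] at h
  rw [h]
  have hfe : (Finset.range (2^k)).filter
        (fun m : ℕ => ((m:ℤ) / (d:ℤ)) % 2 = (a:ℤ) ∧ (m:ℤ) % 2 = (b:ℤ)) =
      (Finset.range (2^k)).filter (fun m : ℕ => (m/d) % 2 = a ∧ (m%d) % 2 = b) := by
    apply Finset.filter_congr
    intro m _
    have e3 : m % d % 2 = m % 2 :=
      Nat.mod_mod_of_dvd m (by rw [hd]; exact dvd_pow_self 2 (by omega))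
    rw [e3]
    constructor <;> rintro ⟨h1, h2⟩ <;>
      exact ⟨by exact_mod_cast h1, by exact_mod_cast h2⟩
  rw [hfe]
  have hqd : 2^k = 2^j * d := by rw [hd, ← pow_add]; congr 1; omega
  rw [hqd, card_filter_div_mod (2^j) d hdpos (fun n => n % 2 = a) (fun n => n % 2 = b)]
  have hcount1 := card_pow_mod_two j hj a ha
  have hcount2 : ((Finset.range d).filter (fun m => m % 2 = b)).card = 2^(k-j-1) := by
    rw [hd]; exact card_pow_mod_two (k-j) (by omega) b hb
  rw [hcount1, hcount2]
  have hl : ((2^(j-1) * 2^(k-j-1) : ℕ) : ℝ≥0∞) = (2:ℝ≥0∞)^(k-2) := by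
    push_cast; rw [← pow_add]; congr 1; omega
  have hr : ((2^j * d : ℕ) : ℝ≥0∞) = (2:ℝ≥0∞)^((k-2)+2) := by
    rw [hd]; push_cast; rw [← pow_add]; congr 1; omega
  rw [hl, hr, ennreal_pow_cancel (k-2) 2]
  rw [sq, ENNReal.mul_inv (Or.inl (by norm_num)) (Or.inl (by norm_num))]

noncomputable def mu : Measure ℝ := volume.restrict (Set.Icc (0:ℝ) 1)

noncomputable def Y (i : ℕ) (x : ℝ) : Bool := decide (⌊(2:ℝ)^(i+1) * x⌋ % 2 = 1)

def bit (c : Bool) : ℕ := if c then 1 else 0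

lemma bit_lt (c : Bool) : bit c < 2 := by cases c <;> simp [bit]

lemma measurable_Y (i : ℕ) : Measurable (Y i) := by
  have h1 : Measurable fun x : ℝ => ⌊(2:ℝ)^(i+1) * x⌋ :=
    Int.measurable_floor.comp (measurable_const_mul _)
  exact (measurable_of_countable (fun m : ℤ => decide (m % 2 = 1))).comp h1

lemma Y_preimage (i : ℕ) (c : Bool) :
    Y i ⁻¹' {c} = {x : ℝ | ⌊(2:ℝ)^(i+1) * x⌋ % 2 = (bit c : ℤ)} := by
  ext x
  simp only [Set.mem_preimage, Set.mem_singleton_iff, Set.mem_setOf_eq, Y]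
  have h := Int.emod_two_eq ⌊(2:ℝ)^(i+1) * x⌋
  cases c <;> simp [bit] <;> omega

instance : IsProbabilityMeasure mu := by
  constructor
  rw [mu, Measure.restrict_apply_univ, Real.volume_Icc]
  norm_num

lemma volume_inter_Icc_eq_Ico (S : Set ℝ) :
    volume (S ∩ Set.Icc (0:ℝ) 1) = volume (S ∩ Set.Ico (0:ℝ) 1) := by
  apply le_antisymm
  · have hsub : S ∩ Set.Icc (0:ℝ) 1 ⊆ (S ∩ Set.Ico (0:ℝ) 1) ∪ {1} := by
      rintro x ⟨hxS, hx0, hx1⟩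
      rcases lt_or_eq_of_le hx1 with h | h
      · exact Or.inl ⟨hxS, hx0, h⟩
      · exact Or.inr (by simp [h])
    calc volume (S ∩ Set.Icc (0:ℝ) 1) ≤ volume ((S ∩ Set.Ico (0:ℝ) 1) ∪ {1}) :=
          measure_mono hsub
      _ ≤ volume (S ∩ Set.Ico (0:ℝ) 1) + volume ({1} : Set ℝ) := measure_union_le _ _
      _ = volume (S ∩ Set.Ico (0:ℝ) 1) := by simp
  · exact measure_mono (Set.inter_subset_inter_right _ Set.Ico_subset_Icc_self)

lemma mu_Y_single (i : ℕ) (c : Bool) : mu (Y i ⁻¹' {c}) = 2⁻¹ := by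
  rw [mu, Measure.restrict_apply ((measurable_Y i) (measurableSet_singleton c)),
    volume_inter_Icc_eq_Ico, Y_preimage]
  have hset : {x : ℝ | ⌊(2:ℝ)^(i+1) * x⌋ % 2 = (bit c : ℤ)} ∩ Set.Ico (0:ℝ) 1 =
      {x : ℝ | x ∈ Set.Ico (0:ℝ) 1 ∧ ⌊(2:ℝ)^(i+1) * x⌋ % 2 = ((bit c : ℕ):ℤ)} := by
    ext x; simp only [Set.mem_inter_iff, Set.mem_setOf_eq]; tauto
  rw [hset]
  exact measure_single_digit (i+1) (by omega) (bit c) (bit_lt c)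

lemma mu_Y_pair {i j : ℕ} (hij : i < j) (c c' : Bool) :
    mu (Y i ⁻¹' {c} ∩ Y j ⁻¹' {c'}) = 2⁻¹ * 2⁻¹ := by
  rw [mu, Measure.restrict_apply (((measurable_Y i) (measurableSet_singleton c)).inter
    ((measurable_Y j) (measurableSet_singleton c'))),
    volume_inter_Icc_eq_Ico, Y_preimage, Y_preimage]
  have hset : ({x : ℝ | ⌊(2:ℝ)^(i+1) * x⌋ % 2 = (bit c : ℤ)} ∩
      {x : ℝ | ⌊(2:ℝ)^(j+1) * x⌋ % 2 = (bit c' : ℤ)}) ∩ Set.Ico (0:ℝ) 1 =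
      {x : ℝ | x ∈ Set.Ico (0:ℝ) 1 ∧
        (⌊(2:ℝ)^(i+1) * x⌋ % 2 = ((bit c : ℕ):ℤ) ∧
         ⌊(2:ℝ)^(j+1) * x⌋ % 2 = ((bit c' : ℕ):ℤ))} := by
    ext x; simp only [Set.mem_inter_iff, Set.mem_setOf_eq]; tauto
  rw [hset]
  exact measure_pair_digit (i+1) (j+1) (by omega) (by omega) _ _ (bit_lt c) (bit_lt c')

lemma map_Y (i : ℕ) : Measure.map (Y i) mu = Measure.map (Y 0) mu := by
  apply MeasureTheory.Measure.ext_of_singleton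
  intro c
  rw [Measure.map_apply (measurable_Y i) (measurableSet_singleton c),
    Measure.map_apply (measurable_Y 0) (measurableSet_singleton c),
    mu_Y_single, mu_Y_single]

lemma indep_Y {i j : ℕ} (hij : i ≠ j) : IndepFun (Y i) (Y j) mu := by
  rw [indepFun_iff_map_prod_eq_prod_map_map (measurable_Y i).aemeasurable
    (measurable_Y j).aemeasurable]
  apply MeasureTheory.Measure.ext_of_singleton
  rintro ⟨c, c'⟩
  have hpre : (fun x => (Y i x, Y j x)) ⁻¹' {(c, c')} = Y i ⁻¹' {c} ∩ Y j ⁻¹' {c'} := by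
    ext x
    simp [Prod.ext_iff]
  rw [Measure.map_apply ((measurable_Y i).prodMk (measurable_Y j))
      (measurableSet_singleton _), hpre,
    ← Set.singleton_prod_singleton, Measure.prod_prod,
    Measure.map_apply (measurable_Y i) (measurableSet_singleton c),
    Measure.map_apply (measurable_Y j) (measurableSet_singleton c'),
    mu_Y_single, mu_Y_single]
  rcases lt_or_gt_of_ne hij with h | h
  · exact mu_Y_pair h c c'
  · rw [Set.inter_comm]; exact mu_Y_pair h c' c

noncomputable def X (i : ℕ) (x : ℝ) : ℝ := if Y i x then 1 else 0

lemma measurable_bif : Measurable (fun b : Bool => if b then (1:ℝ) else 0) :=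
  measurable_of_countable _

lemma main_slln :
    ∀ᵐ x ∂mu, Tendsto (fun n : ℕ => (∑ i ∈ Finset.range n, X i x) / n)
      atTop (nhds (1/2)) := by
  have hX : ∀ i, X i = (fun b : Bool => if b then (1:ℝ) else 0) ∘ Y i := fun i => rfl
  have hmeas : ∀ i, Measurable (X i) := fun i => measurable_bif.comp (measurable_Y i)
  have hint : Integrable (X 0) mu := by
    apply (integrable_const (1:ℝ)).mono' (hmeas 0).aestronglyMeasurable
    filter_upwards with x
    rw [X]
    split <;> simp
  have hindep : Pairwise (Function.onFun (IndepFun · · mu) X) := by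
    intro i j hij
    exact (indep_Y hij).comp measurable_bif measurable_bif
  have hident : ∀ i, IdentDistrib (X i) (X 0) mu mu := by
    intro i
    rw [hX i, hX 0]
    exact ⟨(hmeas i).aemeasurable, (hmeas 0).aemeasurable, by
      rw [← Measure.map_map measurable_bif (measurable_Y i),
        ← Measure.map_map measurable_bif (measurable_Y 0), map_Y i]⟩
  have h := strong_law_ae_real X hint hindep hident
  have hint_eq : mu[X 0] = 1/2 := by
    have hXind : X 0 = (Y 0 ⁻¹' {true}).indicator (fun _ => (1:ℝ)) := by
      ext x
      by_cases hY : Y 0 x = true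
      · rw [X, Set.indicator_of_mem (by simpa using hY)]; simp [hY]
      · rw [X, Set.indicator_of_notMem (by simpa using hY)]
        simp [hY]
    rw [hXind, integral_indicator_const _ ((measurable_Y 0) (measurableSet_singleton true)),
      measureReal_def, mu_Y_single]
    simp [ENNReal.toReal_inv]
  rwa [hint_eq] at h

/-- Borel's strong law of large numbers (geometric form): for Lebesgue-almost every
`x ∈ [0,1]`, the relative frequency of the digit 1 among the first `n` binary digits
`d_k(x) = ⌊2^k x⌋ % 2` (for `1 ≤ k ≤ n`) converges to `1/2`. -/
theorem borel_strong_law_binary_digits :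
    ∀ᵐ x ∂(volume.restrict (Set.Icc (0:ℝ) 1)),
      Tendsto
        (fun n : ℕ =>
          (((Finset.Icc 1 n).filter (fun k => ⌊(2:ℝ) ^ k * x⌋ % 2 = 1)).card : ℝ) / n)
        atTop (nhds (1/2)) := by
  have h := main_slln
  rw [mu] at h
  filter_upwards [h] with x hx
  apply hx.congr
  intro n
  congr 1
  rw [Finset.natCast_card_filter]
  rw [show Finset.Icc 1 n = Finset.Ico 1 (n+1) by rw [Finset.Ico_add_one_right_eq_Icc]]
  rw [Finset.sum_Ico_eq_sum_range]
  simp only [Nat.add_sub_cancel]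
  apply Finset.sum_congr rfl
  intro i _
  rw [X]
  have : Y i x = decide (⌊(2:ℝ)^(i+1) * x⌋ % 2 = 1) := rfl
  rw [this]
  rw [show 1 + i = i + 1 by omega]
  by_cases hcase : ⌊(2:ℝ)^(i+1) * x⌋ % 2 = 1 <;> simp [hcase]
end

section
/- Let T be an arbitrary nonempty index set, and for each finite subset F ⊆ T let μ_F be a Borel probability measure on ℝ^F. Suppose the family (μ_F) is projective: whenever F ⊆ G are finite subsets of T, the pushforward of μ_G under the coordinate-restriction map ℝ^G → ℝ^F equals μ_F. Then there exists a unique probability measure μ on ℝ^T, equipped with the product σ-algebra generated by the coordinate projections, such that for every finite F ⊆ T the pushforward of μ under the projection ℝ^T → ℝ^F equals μ_F. -/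
open MeasureTheory Filter

namespace KolmogorovExtAux

open Set

open scoped ENNReal Classical

variable {T : Type*} [Nonempty T]

/-- The set of measurable cylinders in `ℝ^T`. -/
abbrev cyls (T : Type*) : Set (Set (T → ℝ)) := measurableCylinders (fun _ : T => ℝ)

/-- Projectivity, with the type family made explicit. -/
abbrev IsPF (μ : ∀ F : Finset T, Measure (F → ℝ)) : Prop :=
  IsProjectiveMeasureFamily (α := fun _ : T => ℝ) μ

lemma isSetRing_cyls : IsSetRing (cyls T) where
  empty_mem := empty_mem_measurableCylinders _
  union_mem := fun _ _ hs ht => union_mem_measurableCylinders hs ht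
  sdiff_mem := fun _ _ hs ht => diff_mem_measurableCylinders hs ht

/-- The content associated to a projective family of measures. -/
noncomputable def contFn (μ : ∀ F : Finset T, Measure (F → ℝ)) (s : Set (T → ℝ)) : ℝ≥0∞ :=
  if hs : s ∈ cyls T then
    μ (measurableCylinders.finset hs) (measurableCylinders.set hs) else ∞

variable {μ : ∀ F : Finset T, Measure (F → ℝ)}

lemma contFn_cylinder (hP : IsPF μ) {I : Finset T} {S : Set (I → ℝ)}
    (hS : MeasurableSet S) : contFn μ (cylinder I S) = μ I S := by
  have hmem := cylinder_mem_measurableCylinders (α := fun _ : T => ℝ) I S hS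
  rw [contFn, dif_pos hmem]
  exact hP.congr_cylinder (measurableCylinders.measurableSet hmem) hS
    (measurableCylinders.eq_cylinder hmem).symm

lemma contFn_empty (hP : IsPF μ) : contFn μ ∅ = 0 := by
  have : (∅ : Set (T → ℝ)) = cylinder (∅ : Finset T) (∅ : Set ((∅ : Finset T) → ℝ)) :=
    (cylinder_empty _).symm
  rw [this, contFn_cylinder hP MeasurableSet.empty, measure_empty]

/-- A cylinder on a small index set rewritten on a larger one. -/
lemma cylinder_eq_of_subset {I K : Finset T} (hIK : I ⊆ K) (S : Set (I → ℝ)) :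
    cylinder I S = cylinder (α := fun _ : T => ℝ) K (Finset.restrict₂ (π := fun _ : T => ℝ) hIK ⁻¹' S) := rfl

lemma exists_common_rep {s t : Set (T → ℝ)} (hs : s ∈ cyls T) (ht : t ∈ cyls T) :
    ∃ (K : Finset T) (S U : Set (K → ℝ)), MeasurableSet S ∧ MeasurableSet U ∧
      s = cylinder K S ∧ t = cylinder K U := by
  classical
  refine ⟨measurableCylinders.finset hs ∪ measurableCylinders.finset ht,
    Finset.restrict₂ (π := fun _ : T => ℝ) Finset.subset_union_left ⁻¹' measurableCylinders.set hs,
    Finset.restrict₂ (π := fun _ : T => ℝ) Finset.subset_union_right ⁻¹' measurableCylinders.set ht,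
    (measurableCylinders.measurableSet hs).preimage
      (Finset.measurable_restrict₂ (X := fun _ : T => ℝ) Finset.subset_union_left),
    (measurableCylinders.measurableSet ht).preimage
      (Finset.measurable_restrict₂ (X := fun _ : T => ℝ) Finset.subset_union_right), ?_, ?_⟩
  · exact (measurableCylinders.eq_cylinder hs).trans
      (cylinder_eq_of_subset Finset.subset_union_left _)
  · exact (measurableCylinders.eq_cylinder ht).trans
      (cylinder_eq_of_subset Finset.subset_union_right _)

lemma subset_of_cylinder_subset {K : Finset T} {A B : Set (K → ℝ)}
    (h : (cylinder K A : Set (T → ℝ)) ⊆ cylinder K B) : A ⊆ B := by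
  classical
  intro a ha
  set x : T → ℝ := fun t => if h' : t ∈ K then a ⟨t, h'⟩ else 0 with hx
  have hres : K.restrict x = a := by
    ext i
    simp [hx, Finset.restrict, i.2]
  have hmem : x ∈ cylinder K A := by
    rw [mem_cylinder, hres]; exact ha
  have := h hmem
  rwa [mem_cylinder, hres] at this

lemma contFn_mono (hP : IsPF μ) {s t : Set (T → ℝ)}
    (hs : s ∈ cyls T) (ht : t ∈ cyls T) (hst : s ⊆ t) : contFn μ s ≤ contFn μ t := by
  obtain ⟨K, S, U, hSm, hUm, rfl, rfl⟩ := exists_common_rep hs ht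
  rw [contFn_cylinder hP hSm, contFn_cylinder hP hUm]
  exact measure_mono (subset_of_cylinder_subset hst)

lemma contFn_union (hP : IsPF μ) {s t : Set (T → ℝ)}
    (hs : s ∈ cyls T) (ht : t ∈ cyls T) (hdis : Disjoint s t) :
    contFn μ (s ∪ t) = contFn μ s + contFn μ t := by
  obtain ⟨K, S, U, hSm, hUm, rfl, rfl⟩ := exists_common_rep hs ht
  rw [union_cylinder_same, contFn_cylinder hP (hSm.union hUm), contFn_cylinder hP hSm,
    contFn_cylinder hP hUm]
  have hSU : Disjoint S U := by
    rw [Set.disjoint_iff_inter_eq_empty]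
    have h1 : cylinder K S ∩ cylinder K U = (∅ : Set (T → ℝ)) :=
      Set.disjoint_iff_inter_eq_empty.mp hdis
    rw [inter_cylinder_same] at h1
    exact (cylinder_eq_empty_iff (α := fun _ : T => ℝ) K (S ∩ U)).mp h1
  exact measure_union hSU hUm

lemma contFn_union_le (hP : IsPF μ) {s t : Set (T → ℝ)}
    (hs : s ∈ cyls T) (ht : t ∈ cyls T) :
    contFn μ (s ∪ t) ≤ contFn μ s + contFn μ t := by
  have h1 : s ∪ t = s ∪ (t \ s) := by rw [Set.union_diff_self]
  rw [h1, contFn_union hP hs (isSetRing_cyls.sdiff_mem ht hs) disjoint_sdiff_self_right]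
  exact add_le_add le_rfl (contFn_mono hP (isSetRing_cyls.sdiff_mem ht hs) ht diff_subset)

lemma contFn_biUnion_le (hP : IsPF μ) {f : ℕ → Set (T → ℝ)}
    (hf : ∀ n, f n ∈ cyls T) (n : ℕ) :
    contFn μ (⋃ k ∈ Finset.range n, f k) ≤ ∑ k ∈ Finset.range n, contFn μ (f k) := by
  classical
  induction n with
  | zero => simp [contFn_empty hP]
  | succ n ih =>
      rw [Finset.range_add_one]
      rw [Finset.sum_insert (by simp)]
      have : (⋃ k ∈ insert n (Finset.range n), f k) = f n ∪ ⋃ k ∈ Finset.range n, f k := by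
        simp [Set.biUnion_insert]
      rw [this]
      refine (contFn_union_le hP (hf n) (isSetRing_cyls.biUnion_mem _ fun k _ => hf k)).trans ?_
      exact add_le_add le_rfl ih

lemma contFn_le_one (hP : IsPF μ) (hprob : ∀ F, IsProbabilityMeasure (μ F))
    {s : Set (T → ℝ)} (hs : s ∈ cyls T) : contFn μ s ≤ 1 := by
  rw [contFn, dif_pos hs]
  exact prob_le_one

/-- Key compactness lemma: the content is continuous at `∅` along antitone sequences of
cylinders. -/
lemma exists_contFn_le (hP : IsPF μ)
    (hprob : ∀ F, IsProbabilityMeasure (μ F))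
    {f : ℕ → Set (T → ℝ)} (hf : ∀ n, f n ∈ cyls T) (hanti : Antitone f)
    (hempty : ⋂ n, f n = ∅) {ε : ℝ≥0∞} (hε : ε ≠ 0) : ∃ n, contFn μ (f n) ≤ ε := by
  classical
  by_contra hcon
  push_neg at hcon
  -- notation for the representations
  set J : ℕ → Finset T := fun n => measurableCylinders.finset (hf n) with hJ
  set S : ∀ n, Set (J n → ℝ) := fun n => measurableCylinders.set (hf n) with hS
  have hrep : ∀ n, f n = cylinder (J n) (S n) := fun n => measurableCylinders.eq_cylinder (hf n)
  have hSm : ∀ n, MeasurableSet (S n) := fun n => measurableCylinders.measurableSet (hf n)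
  have hcont : ∀ n, contFn μ (f n) = μ (J n) (S n) := fun n => by rw [contFn, dif_pos (hf n)]
  -- choose small positive numbers summing to less than ε
  obtain ⟨δ, hδpos, hδsum⟩ := ENNReal.exists_pos_sum_of_countable hε ℕ
  -- choose compact approximations
  have hK : ∀ n, ∃ K ⊆ S n, IsCompact K ∧ μ (J n) (S n) < μ (J n) K + (δ n : ℝ≥0∞) := fun n =>
    (hSm n).exists_isCompact_lt_add (measure_ne_top _ _) (ENNReal.coe_ne_zero.mpr (hδpos n).ne')
  choose K hKsub hKcomp hKlt using hK
  have hKm : ∀ n, MeasurableSet (K n) := fun n => (hKcomp n).isClosed.measurableSet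
  have hdiff : ∀ n, μ (J n) (S n \ K n) ≤ (δ n : ℝ≥0∞) := by
    intro n
    rw [measure_diff (hKsub n) (hKm n).nullMeasurableSet (measure_ne_top _ _)]
    rw [tsub_le_iff_right]
    exact (hKlt n).le.trans (by rw [add_comm])
  -- the compact cylinders
  set Cyl : ℕ → Set (T → ℝ) := fun n => cylinder (J n) (K n) with hCyl
  -- each finite intersection is nonempty
  have hne : ∀ n, (⋂ k ∈ Finset.range (n + 1), Cyl k).Nonempty := by
    intro n
    rw [Set.nonempty_iff_ne_empty]
    intro hDempty
    -- then f n is covered by the small differences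
    have hcover : f n ⊆ ⋃ k ∈ Finset.range (n + 1), (f k \ Cyl k) := by
      intro x hx
      have hxk : ∀ k, k ≤ n → x ∈ f k := fun k hk => hanti hk hx
      by_contra hxU
      simp only [Set.mem_iUnion, not_exists, Set.mem_diff, not_and, not_not] at hxU
      have : x ∈ ⋂ k ∈ Finset.range (n + 1), Cyl k := by
        simp only [Set.mem_iInter]
        intro k hk
        exact hxU k hk (hxk k (Nat.lt_succ_iff.mp (Finset.mem_range.mp hk)))
      rw [hDempty] at this
      exact this
    have hdiffC : ∀ k, f k \ Cyl k ∈ cyls T := by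
      intro k
      rw [hrep k, hCyl, diff_cylinder_same]
      exact cylinder_mem_measurableCylinders (α := fun _ : T => ℝ) _ _ ((hSm k).diff (hKm k))
    have hcontdiff : ∀ k, contFn μ (f k \ Cyl k) = μ (J k) (S k \ K k) := by
      intro k
      rw [hrep k, hCyl, diff_cylinder_same, contFn_cylinder hP ((hSm k).diff (hKm k))]
    have hle : contFn μ (f n) ≤ ∑ k ∈ Finset.range (n + 1), contFn μ (f k \ Cyl k) :=
      (contFn_mono hP (hf n) (isSetRing_cyls.biUnion_mem _ fun k _ => hdiffC k) hcover).trans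
        (contFn_biUnion_le hP hdiffC (n + 1))
    have hlt : contFn μ (f n) < ε := by
      refine hle.trans_lt (lt_of_le_of_lt ?_ hδsum)
      calc ∑ k ∈ Finset.range (n + 1), contFn μ (f k \ Cyl k)
          ≤ ∑ k ∈ Finset.range (n + 1), (δ k : ℝ≥0∞) := by
            refine Finset.sum_le_sum fun k _ => ?_
            rw [hcontdiff k]; exact hdiff k
        _ ≤ ∑' k, (δ k : ℝ≥0∞) := ENNReal.sum_le_tsum _
    exact absurd hlt (not_lt.mpr (hcon n).le)
  -- pick points in the finite intersections
  choose x hxmem using hne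
  have hxK : ∀ k n, k ≤ n → (J k).restrict (x n) ∈ K k := by
    intro k n hkn
    have := hxmem n
    simp only [Set.mem_iInter] at this
    exact this k (Finset.mem_range.mpr (Nat.lt_succ_of_le hkn))
  -- modify outside the union of the index sets
  set z : ℕ → T → ℝ := fun n t => if ∃ k, t ∈ J k then x n t else 0 with hz
  have hzK : ∀ k n, k ≤ n → (J k).restrict (z n) ∈ K k := by
    intro k n hkn
    have hres : (J k).restrict (z n) = (J k).restrict (x n) := by
      ext i
      simp only [Finset.restrict, hz]
      rw [if_pos ⟨k, i.2⟩]
    rw [hres]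
    exact hxK k n hkn
  -- an ultrafilter extending atTop
  set U : Ultrafilter ℕ := Ultrafilter.of atTop with hUdef
  have hUle : (U : Filter ℕ) ≤ atTop := Ultrafilter.of_le _
  have hUmem : ∀ k, {n | k ≤ n} ∈ (U : Filter ℕ) := fun k => hUle (mem_atTop k)
  -- limits along the ultrafilter
  have hlim : ∀ t : T, ∃ a : ℝ, Tendsto (fun n => z n t) (U : Filter ℕ) (nhds a) := by
    intro t
    by_cases ht : ∃ k, t ∈ J k
    · obtain ⟨k, hk⟩ := ht
      have hA : IsCompact ((fun g : (J k → ℝ) => g ⟨t, hk⟩) '' K k) :=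
        (hKcomp k).image (continuous_apply _)
      have hev : ∀ᶠ n in (U : Filter ℕ), z n t ∈ (fun g : (J k → ℝ) => g ⟨t, hk⟩) '' K k := by
        filter_upwards [hUmem k] with n hn
        exact ⟨(J k).restrict (z n), hzK k n hn, rfl⟩
      have hle' : (Ultrafilter.map (fun n => z n t) U : Filter ℝ) ≤
          Filter.principal ((fun g : (J k → ℝ) => g ⟨t, hk⟩) '' K k) := by
        rw [Ultrafilter.coe_map, Filter.le_principal_iff, Filter.mem_map]
        exact hev
      obtain ⟨a, _, hle2⟩ := hA.ultrafilter_le_nhds _ hle'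
      exact ⟨a, by rwa [Ultrafilter.coe_map] at hle2⟩
    · refine ⟨0, ?_⟩
      have : (fun n => z n t) = fun _ => (0 : ℝ) := by
        funext n; simp only [hz]; rw [if_neg ht]
      rw [this]
      exact tendsto_const_nhds
  choose y hy using hlim
  -- the limit point is in every compact cylinder
  have hyK : ∀ k, (J k).restrict y ∈ K k := by
    intro k
    have htd : Tendsto (fun n => (J k).restrict (z n)) (U : Filter ℕ)
        (nhds ((J k).restrict y)) := tendsto_pi_nhds.mpr fun i => hy i.1
    refine (hKcomp k).isClosed.mem_of_tendsto htd ?_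
    filter_upwards [hUmem k] with n hn
    exact hzK k n hn
  have hymem : y ∈ ⋂ n, f n := by
    rw [Set.mem_iInter]
    intro n
    rw [hrep n, mem_cylinder]
    exact hKsub n (hyK n)
  rw [hempty] at hymem
  exact hymem

/-- Countable subadditivity of the content on cylinders. -/
lemma contFn_sigma_subadd (hP : IsPF μ)
    (hprob : ∀ F, IsProbabilityMeasure (μ F))
    {s : Set (T → ℝ)} (hs : s ∈ cyls T) {f : ℕ → Set (T → ℝ)} (hf : ∀ n, f n ∈ cyls T)
    (hcover : s ⊆ ⋃ n, f n) : contFn μ s ≤ ∑' n, contFn μ (f n) := by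
  classical
  refine ENNReal.le_of_forall_pos_le_add fun ε hε _ => ?_
  set D : ℕ → Set (T → ℝ) := fun n => s \ ⋃ k ∈ Finset.range (n + 1), f k with hD
  have hDC : ∀ n, D n ∈ cyls T := fun n =>
    isSetRing_cyls.sdiff_mem hs (isSetRing_cyls.biUnion_mem _ fun k _ => hf k)
  have hDanti : Antitone D := by
    intro m n hmn
    refine Set.diff_subset_diff_right ?_
    exact Set.biUnion_subset_biUnion_left (Finset.range_subset_range.mpr (by omega))
  have hDempty : ⋂ n, D n = ∅ := by
    ext x
    simp only [Set.mem_iInter, Set.mem_empty_iff_false, iff_false, not_forall]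
    by_cases hx : x ∈ s
    · obtain ⟨n, hn⟩ := Set.mem_iUnion.mp (hcover hx)
      exact ⟨n, fun h => h.2 (Set.mem_biUnion (Finset.mem_range.mpr n.lt_succ_self) hn)⟩
    · exact ⟨0, fun h => hx h.1⟩
  obtain ⟨n, hn⟩ := exists_contFn_le hP hprob hDC hDanti hDempty
    (ε := (ε : ℝ≥0∞)) (by exact_mod_cast hε.ne')
  have hsub : s ⊆ D n ∪ ⋃ k ∈ Finset.range (n + 1), f k := by
    intro x hx
    by_cases hxU : x ∈ ⋃ k ∈ Finset.range (n + 1), f k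
    · exact Or.inr hxU
    · exact Or.inl ⟨hx, hxU⟩
  calc contFn μ s ≤ contFn μ (D n ∪ ⋃ k ∈ Finset.range (n + 1), f k) :=
        contFn_mono hP hs (isSetRing_cyls.union_mem (hDC n)
          (isSetRing_cyls.biUnion_mem _ fun k _ => hf k)) hsub
    _ ≤ contFn μ (D n) + contFn μ (⋃ k ∈ Finset.range (n + 1), f k) :=
        contFn_union_le hP (hDC n) (isSetRing_cyls.biUnion_mem _ fun k _ => hf k)
    _ ≤ (ε : ℝ≥0∞) + ∑ k ∈ Finset.range (n + 1), contFn μ (f k) :=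
        add_le_add hn (contFn_biUnion_le hP hf (n + 1))
    _ ≤ (ε : ℝ≥0∞) + ∑' k, contFn μ (f k) :=
        add_le_add le_rfl (ENNReal.sum_le_tsum _)
    _ = ∑' k, contFn μ (f k) + ε := by rw [add_comm]

variable (μ)

/-- The outer measure induced by the content. -/
noncomputable def outer (hP : IsPF μ) : OuterMeasure (T → ℝ) :=
  OuterMeasure.ofFunction (contFn μ) (contFn_empty hP)

variable {μ}

lemma outer_eq (hP : IsPF μ) (hprob : ∀ F, IsProbabilityMeasure (μ F))
    {s : Set (T → ℝ)} (hs : s ∈ cyls T) : outer μ hP s = contFn μ s := by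
  refine le_antisymm (OuterMeasure.ofFunction_le s) ?_
  rw [outer, OuterMeasure.ofFunction_apply]
  refine le_iInf fun f => le_iInf fun hcover => ?_
  by_cases hfC : ∀ n, f n ∈ cyls T
  · exact contFn_sigma_subadd hP hprob hs hfC hcover
  · push_neg at hfC
    obtain ⟨n, hn⟩ := hfC
    have : contFn μ (f n) = ∞ := by rw [contFn, dif_neg hn]
    refine le_trans ?_ (ENNReal.le_tsum n)
    rw [this]
    exact le_top

lemma isCaratheodory (hP : IsPF μ)
    (hprob : ∀ F, IsProbabilityMeasure (μ F)) {t : Set (T → ℝ)} (ht : t ∈ cyls T) :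
    (outer μ hP).IsCaratheodory t := by
  rw [OuterMeasure.isCaratheodory_iff_le']
  intro s
  conv_rhs => rw [outer, OuterMeasure.ofFunction_apply]
  refine le_iInf fun f => le_iInf fun hcover => ?_
  by_cases hfC : ∀ n, f n ∈ cyls T
  · have h1 : outer μ hP (s ∩ t) ≤ ∑' n, contFn μ (f n ∩ t) := by
      calc outer μ hP (s ∩ t) ≤ outer μ hP (⋃ n, f n ∩ t) :=
            (outer μ hP).mono (by rw [← Set.iUnion_inter]; exact Set.inter_subset_inter_left _ hcover)
        _ ≤ ∑' n, outer μ hP (f n ∩ t) := measure_iUnion_le _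
        _ ≤ ∑' n, contFn μ (f n ∩ t) :=
            ENNReal.tsum_le_tsum fun n => OuterMeasure.ofFunction_le _
    have h2 : outer μ hP (s \ t) ≤ ∑' n, contFn μ (f n \ t) := by
      calc outer μ hP (s \ t) ≤ outer μ hP (⋃ n, f n \ t) :=
            (outer μ hP).mono (by rw [← Set.iUnion_diff]; exact Set.diff_subset_diff_left hcover)
        _ ≤ ∑' n, outer μ hP (f n \ t) := measure_iUnion_le _
        _ ≤ ∑' n, contFn μ (f n \ t) :=
            ENNReal.tsum_le_tsum fun n => OuterMeasure.ofFunction_le _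
    calc outer μ hP (s ∩ t) + outer μ hP (s \ t)
        ≤ (∑' n, contFn μ (f n ∩ t)) + ∑' n, contFn μ (f n \ t) := add_le_add h1 h2
      _ = ∑' n, (contFn μ (f n ∩ t) + contFn μ (f n \ t)) := (ENNReal.tsum_add).symm
      _ = ∑' n, contFn μ (f n) := by
          refine tsum_congr fun n => ?_
          rw [← contFn_union hP (isSetRing_cyls.inter_mem (hfC n) ht)
            (isSetRing_cyls.sdiff_mem (hfC n) ht) (disjoint_sdiff_self_right.mono_left
              Set.inter_subset_right), Set.inter_union_diff]
  · push_neg at hfC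
    obtain ⟨n, hn⟩ := hfC
    have : contFn μ (f n) = ∞ := by rw [contFn, dif_neg hn]
    refine le_trans ?_ (ENNReal.le_tsum n)
    rw [this]
    exact le_top

variable (μ)

/-- The Kolmogorov extension measure. -/
noncomputable def limitMeasure (hP : IsPF μ)
    (hprob : ∀ F, IsProbabilityMeasure (μ F)) : Measure (T → ℝ) :=
  (outer μ hP).toMeasure (by
    rw [← generateFrom_measurableCylinders]
    exact MeasurableSpace.generateFrom_le fun t ht =>
      (OuterMeasure.isCaratheodory_iff _).mpr (isCaratheodory hP hprob ht))

variable {μ}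

lemma limitMeasure_cylinder (hP : IsPF μ)
    (hprob : ∀ F, IsProbabilityMeasure (μ F)) {I : Finset T} {S : Set (I → ℝ)}
    (hS : MeasurableSet S) : limitMeasure μ hP hprob (cylinder I S) = μ I S := by
  rw [limitMeasure, toMeasure_apply _ _ (hS.cylinder I),
    outer_eq hP hprob (cylinder_mem_measurableCylinders (α := fun _ : T => ℝ) I S hS), contFn_cylinder hP hS]

lemma isProjectiveLimit_limitMeasure (hP : IsPF μ)
    (hprob : ∀ F, IsProbabilityMeasure (μ F)) :
    IsProjectiveLimit (α := fun _ : T => ℝ) (limitMeasure μ hP hprob) μ := by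
  intro I
  refine Measure.ext fun S hS => ?_
  rw [Measure.map_apply (I.measurable_restrict) hS]
  exact limitMeasure_cylinder hP hprob hS

end KolmogorovExtAux

/-- Kolmogorov's consistency (extension) theorem: given a nonempty index set `T` and,
for each finite `F ⊆ T`, a Borel probability measure `μ F` on `ℝ^F`, such that the
family is projective (for `F ⊆ G`, the pushforward of `μ G` under coordinate
restriction `ℝ^G → ℝ^F` is `μ F`), there is a unique probability measure `ν` on `ℝ^T`
(with the product σ-algebra) whose pushforward under the projection `ℝ^T → ℝ^F` is
`μ F` for every finite `F ⊆ T`. -/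
theorem kolmogorov_extension_theorem
    {T : Type*} [Nonempty T]
    (μ : ∀ F : Finset T, Measure (F → ℝ))
    (hprob : ∀ F, IsProbabilityMeasure (μ F))
    (hproj : ∀ (F G : Finset T) (hFG : F ⊆ G),
      Measure.map (fun (x : G → ℝ) (i : F) => x ⟨i.1, hFG i.2⟩) (μ G) = μ F) :
    ∃! ν : Measure (T → ℝ),
      IsProbabilityMeasure ν ∧
        ∀ F : Finset T,
          Measure.map (fun (x : T → ℝ) (i : F) => x i.1) ν = μ F := by
  classical
  haveI : ∀ F, IsProbabilityMeasure (μ F) := hprob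
  have hP : KolmogorovExtAux.IsPF μ := fun I J hJI => (hproj J I hJI).symm
  have hlim := KolmogorovExtAux.isProjectiveLimit_limitMeasure hP hprob
  refine ⟨KolmogorovExtAux.limitMeasure μ hP hprob, ⟨hlim.isProbabilityMeasure, fun F => hlim F⟩,
    fun ν' hν' => ?_⟩
  have h1 : IsProjectiveLimit (α := fun _ : T => ℝ) ν' μ := fun I => hν'.2 I
  exact h1.unique hlim
end
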